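/- Let G be a simple graph on a finite vertex type V and let m : V → ℕ with m v ≥ 1 for every v ∈ V. Then: (a) a set D' of vertices of the fiber-clique blow-up G⟨m⟩ is a dominating set of G⟨m⟩ if and only if the projected set {v : ∃ i, ⟨v,i⟩ ∈ D'} is a dominating set of G; and (b) the minimum size of a dominating set of G⟨m⟩ equals the minimum size of a dominating set of G. -/

import Mathlib

/-- The fiber-clique blow-up `G⟨m⟩` of a simple graph `G` along `m : V → ℕ`: the vertex type is
`Σ v : V, Fin (m v)`, and two distinct vertices `⟨u, i⟩` and `⟨v, j⟩` are adjacent iff `u = v`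
or `u` and `v` are adjacent in `G`. -/
def SimpleGraph.fiberCliqueBlowup {V : Type*} (G : SimpleGraph V) (m : V → ℕ) :
    SimpleGraph (Σ v : V, Fin (m v)) where
  Adj a b := a ≠ b ∧ (a.1 = b.1 ∨ G.Adj a.1 b.1)
  symm := by
    constructor
    rintro a b ⟨hne, h⟩
    exact ⟨hne.symm, by cases h with
      | inl h => exact Or.inl h.symm
      | inr h => exact Or.inr h.symm⟩
  loopless := by constructor; rintro a ⟨hne, -⟩; exact hne rfl

/-- A set `D` of vertices of a graph `H` is a dominating set if every vertex `w` satisfies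
`w ∈ D` or `w` is adjacent to some vertex of `D`. -/
def SimpleGraph.IsDominatingSet {W : Type*} (H : SimpleGraph W) (D : Set W) : Prop :=
  ∀ w : W, w ∈ D ∨ ∃ d ∈ D, H.Adj w d

/-!
Since every fiber is a nonempty clique, a vertex `⟨v, i⟩` of `G⟨m⟩` is dominated by `D'` exactly
when `v` is dominated in `G` by the projection of `D'`. Projecting a dominating set does not
increase its size, and lifting a dominating set of `G` along `v ↦ ⟨v, 0⟩` preserves its size, so
the two domination numbers agree.
-/

theorem Set.setOf_exists_sigma_mk_mem {α : Type*} {β : α → Type*} (s : Set (Σ a, β a)) :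
    {a | ∃ b, (⟨a, b⟩ : Σ a, β a) ∈ s} = Sigma.fst '' s := by
  ext a
  constructor
  · rintro ⟨b, hb⟩
    exact ⟨⟨a, b⟩, hb, rfl⟩
  · rintro ⟨⟨a, b⟩, hb, rfl⟩
    exact ⟨b, hb⟩

namespace SimpleGraph

section Domination

variable {W : Type*} {H : SimpleGraph W}

theorem isDominatingSet_univ (H : SimpleGraph W) : H.IsDominatingSet Set.univ :=
  fun w => Or.inl (Set.mem_univ w)

theorem IsDominatingSet.mono {D E : Set W} (hD : H.IsDominatingSet D) (hDE : D ⊆ E) :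
    H.IsDominatingSet E := fun w =>
  (hD w).imp (@hDE w) fun ⟨d, hd, hadj⟩ => ⟨d, hDE hd, hadj⟩

/-- The domination number `γ(H)`. It is `0` when `H` has an infinite dominating set, because
`Set.ncard` of an infinite set is `0`. -/
noncomputable def dominationNumber (H : SimpleGraph W) : ℕ :=
  sInf {n : ℕ | ∃ D : Set W, H.IsDominatingSet D ∧ D.ncard = n}

theorem dominationNumber_le_ncard {D : Set W} (hD : H.IsDominatingSet D) :
    H.dominationNumber ≤ D.ncard :=
  Nat.sInf_le ⟨D, hD, rfl⟩

theorem exists_isDominatingSet_ncard_eq_dominationNumber (H : SimpleGraph W) :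
    ∃ D : Set W, H.IsDominatingSet D ∧ D.ncard = H.dominationNumber :=
  Nat.sInf_mem (s := {n | ∃ D : Set W, H.IsDominatingSet D ∧ D.ncard = n})
    ⟨_, Set.univ, H.isDominatingSet_univ, rfl⟩

end Domination

section FiberCliqueBlowup

variable {V : Type*} {G : SimpleGraph V} {m : V → ℕ}

theorem fiberCliqueBlowup_adj_of_fst_eq {a b : Σ v : V, Fin (m v)} (hne : a ≠ b)
    (h : a.1 = b.1) : (G.fiberCliqueBlowup m).Adj a b :=
  ⟨hne, Or.inl h⟩

theorem fiberCliqueBlowup_adj_of_adj {a b : Σ v : V, Fin (m v)} (h : G.Adj a.1 b.1) :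
    (G.fiberCliqueBlowup m).Adj a b :=
  ⟨fun hab => G.ne_of_adj h (congrArg Sigma.fst hab), Or.inr h⟩

theorem IsDominatingSet.fiberCliqueBlowup_of_image_fst {D' : Set (Σ v : V, Fin (m v))}
    (hD : G.IsDominatingSet (Sigma.fst '' D')) : (G.fiberCliqueBlowup m).IsDominatingSet D' := by
  intro w
  obtain ⟨d, hd, hdw⟩ | ⟨_, ⟨d, hd, rfl⟩, hadj⟩ := hD w.1
  · by_cases hwd : w = d
    · exact Or.inl (hwd ▸ hd)
    · exact Or.inr ⟨d, hd, fiberCliqueBlowup_adj_of_fst_eq hwd hdw.symm⟩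
  · exact Or.inr ⟨d, hd, fiberCliqueBlowup_adj_of_adj hadj⟩

theorem IsDominatingSet.image_fst_of_fiberCliqueBlowup (hm : ∀ v, 1 ≤ m v)
    {D' : Set (Σ v : V, Fin (m v))} (hD : (G.fiberCliqueBlowup m).IsDominatingSet D') :
    G.IsDominatingSet (Sigma.fst '' D') := by
  intro v
  obtain hv | ⟨d, hd, -, hdv | hadj⟩ := hD ⟨v, ⟨0, hm v⟩⟩
  · exact Or.inl ⟨_, hv, rfl⟩
  · exact Or.inl ⟨d, hd, hdv.symm⟩
  · exact Or.inr ⟨d.1, ⟨d, hd, rfl⟩, hadj⟩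

theorem isDominatingSet_fiberCliqueBlowup_iff (hm : ∀ v, 1 ≤ m v)
    {D' : Set (Σ v : V, Fin (m v))} :
    (G.fiberCliqueBlowup m).IsDominatingSet D' ↔ G.IsDominatingSet (Sigma.fst '' D') :=
  ⟨IsDominatingSet.image_fst_of_fiberCliqueBlowup hm,
    IsDominatingSet.fiberCliqueBlowup_of_image_fst⟩

theorem dominationNumber_fiberCliqueBlowup [Finite V] (hm : ∀ v, 1 ≤ m v) :
    (G.fiberCliqueBlowup m).dominationNumber = G.dominationNumber := by
  apply le_antisymm
  · obtain ⟨D, hD, hcard⟩ := G.exists_isDominatingSet_ncard_eq_dominationNumber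
    let lift : V → Σ v : V, Fin (m v) := fun v => ⟨v, ⟨0, hm v⟩⟩
    have hlift : (G.fiberCliqueBlowup m).IsDominatingSet (lift '' D) :=
      IsDominatingSet.fiberCliqueBlowup_of_image_fst <|
        hD.mono fun v hv => ⟨lift v, ⟨v, hv, rfl⟩, rfl⟩
    calc (G.fiberCliqueBlowup m).dominationNumber
        ≤ (lift '' D).ncard := dominationNumber_le_ncard hlift
      _ = G.dominationNumber := by
        rw [Set.ncard_image_of_injective D fun _ _ h => congrArg Sigma.fst h, hcard]
  · obtain ⟨D', hD', hcard⟩ :=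
      (G.fiberCliqueBlowup m).exists_isDominatingSet_ncard_eq_dominationNumber
    calc G.dominationNumber
        ≤ (Sigma.fst '' D').ncard :=
          dominationNumber_le_ncard (hD'.image_fst_of_fiberCliqueBlowup hm)
      -- finiteness of `D'` is needed here: `ncard` of an infinite set is `0`
      _ ≤ D'.ncard := Set.ncard_image_le
      _ = (G.fiberCliqueBlowup m).dominationNumber := hcard

end FiberCliqueBlowup

end SimpleGraph

theorem dominatingSet_fiberCliqueBlowup {V : Type*} [Fintype V] (G : SimpleGraph V)
    (m : V → ℕ) (hm : ∀ v : V, 1 ≤ m v) :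
    (∀ D' : Set (Σ v : V, Fin (m v)),
      (G.fiberCliqueBlowup m).IsDominatingSet D' ↔
        G.IsDominatingSet {v : V | ∃ i : Fin (m v), (⟨v, i⟩ : Σ v : V, Fin (m v)) ∈ D'}) ∧
    sInf {n : ℕ | ∃ D' : Set (Σ v : V, Fin (m v)),
        (G.fiberCliqueBlowup m).IsDominatingSet D' ∧ D'.ncard = n} =
      sInf {n : ℕ | ∃ D : Set V, G.IsDominatingSet D ∧ D.ncard = n} := by
  refine ⟨fun D' => ?_, SimpleGraph.dominationNumber_fiberCliqueBlowup hm⟩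
  rw [Set.setOf_exists_sigma_mk_mem]
  exact SimpleGraph.isDominatingSet_fiberCliqueBlowup_iff hm
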